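/- Let A ⊆ Φ⁺ be finite. Then A is biclosed if and only if A is biconvex if and only if A is separable. -/

import Mathlib

open Pointwise

noncomputable section

/-- The set of nonnegative linear combinations of elements of `X`. -/
def coneOf {V : Type*} [AddCommGroup V] [Module ℝ V] (X : Set V) : Set V :=
  {v | ∃ (n : ℕ) (c : Fin n → ℝ) (f : Fin n → V),
    (∀ i, 0 ≤ c i) ∧ (∀ i, f i ∈ X) ∧ ∑ i, c i • f i = v}

/-- A geometric representation of the Coxeter system `cs` on the real quadratic
space `(V, bil)`: each simple generator acts as the `bil`-reflection in its simple
root, and the simple roots form a simple system. -/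
structure GeomRep {B : Type*} [Fintype B] {W : Type*} [Group W]
    (M : CoxeterMatrix B) (cs : CoxeterSystem M W)
    (V : Type*) [AddCommGroup V] [Module ℝ V] where
  /-- the symmetric bilinear form -/
  bil : LinearMap.BilinForm ℝ V
  bil_symm : ∀ u v : V, bil u v = bil v u
  /-- the representation of `W` by linear automorphisms of `V` -/
  π : W →* (V ≃ₗ[ℝ] V)
  /-- the simple roots -/
  α : B → V
  norm_one : ∀ i, bil (α i) (α i) = 1
  simple_refl : ∀ i v, π (cs.simple i) v = v - (2 * bil (α i) v) • α i
  pos_indep : ∀ c : B → ℝ, (∀ i, 0 ≤ c i) → ∑ i, c i • α i = 0 → ∀ i, c i = 0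
  angle_finite : ∀ i j, i ≠ j → M.M i j ≠ 0 →
    bil (α i) (α j) = - Real.cos (Real.pi / (M.M i j : ℝ))
  angle_infinite : ∀ i j, i ≠ j → M.M i j = 0 → bil (α i) (α j) ≤ -1

namespace GeomRep

variable {B : Type*} [Fintype B] {W : Type*} [Group W]
  {M : CoxeterMatrix B} {cs : CoxeterSystem M W}
  {V : Type*} [AddCommGroup V] [Module ℝ V]

/-- The root system `Φ = W(Δ)`. -/
def Phi (G : GeomRep M cs V) : Set V := {v | ∃ (w : W) (i : B), G.π w (G.α i) = v}

/-- The positive roots `Φ⁺ = cone(Δ) ∩ Φ`. -/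
def PhiPos (G : GeomRep M cs V) : Set V := G.Phi ∩ coneOf (Set.range G.α)

/-- The (left) inversion set `N(w) = Φ⁺ ∩ w(Φ⁻)`. -/
def N (G : GeomRep M cs V) (w : W) : Set V := G.PhiPos ∩ (G.π w '' (-G.PhiPos))

/-- `A ⊆ Φ⁺` is closed if for all `α, β ∈ A`, every root in `cone(α,β)` lies in `A`. -/
def IsClosedSet (G : GeomRep M cs V) (A : Set V) : Prop :=
  ∀ a ∈ A, ∀ b ∈ A, coneOf {a, b} ∩ G.Phi ⊆ A

/-- `A` is biclosed if `A` and `Φ⁺ \ A` are both closed. -/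
def IsBiclosed (G : GeomRep M cs V) (A : Set V) : Prop :=
  G.IsClosedSet A ∧ G.IsClosedSet (G.PhiPos \ A)

/-- `A` is convex if `A = cone(A) ∩ Φ`. -/
def IsConvexSet (G : GeomRep M cs V) (A : Set V) : Prop :=
  A = coneOf A ∩ G.Phi

/-- `A` is biconvex if `A` and `Φ⁺ \ A` are both convex. -/
def IsBiconvex (G : GeomRep M cs V) (A : Set V) : Prop :=
  G.IsConvexSet A ∧ G.IsConvexSet (G.PhiPos \ A)

/-- `A ⊆ Φ⁺` is separable if `cone(A) ∩ cone(Φ⁺ \ A) = {0}`. -/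
def IsSeparable (G : GeomRep M cs V) (A : Set V) : Prop :=
  coneOf A ∩ coneOf (G.PhiPos \ A) = {0}

end GeomRep

/-- The right weak order on a Coxeter group. -/
def WeakLE {B : Type*} {W : Type*} [Group W] {M : CoxeterMatrix B}
    (cs : CoxeterSystem M W) (u w : W) : Prop :=
  cs.length u + cs.length (u⁻¹ * w) = cs.length w

/-! Biconvex ⇒ biclosed and separable ⇒ biconvex only unwind the definitions (and `0 ∉ Φ`).
For biclosed ⇒ separable, encode `A ⊆ Φ⁺` by its twist `(Φ⁺ \ A) ∪ -A`, which is `w(Φ⁺)` when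
`A = N(w)`; `A` is biclosed iff its twist is closed. A finite nonempty biclosed `A` contains a
simple root `α_i`, and `s_i(A \ {α_i})` is a smaller biclosed set whose twist is the `s_i`-image
of that of `A`. By induction the twist of `A` is some `w(Φ⁺)`, so it lies in an open half-space
`{g < 0}` because `Φ⁺` does (Gordan's theorem for the simple roots); then `g` separates `A` from
`Φ⁺ \ A`. That `s_i` permutes `Φ⁺ \ {α_i}` rests on `Φ = Φ⁺ ∪ -Φ⁺`, which reduces to dihedral
subgroups, where the coefficients of `⋯ s_i s_j (α_i)` are Chebyshev values `U_k(-B(α_i, α_j))`. -/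

section Cone

variable {V : Type*} [AddCommGroup V] [Module ℝ V]

theorem coneOf_eq_hull (X : Set V) : coneOf X = PointedCone.hull ℝ X := by
  ext v
  rw [SetLike.mem_coe, Submodule.mem_span_set']
  constructor
  · rintro ⟨n, c, f, hc, hf, rfl⟩
    exact ⟨n, fun i => ⟨c i, hc i⟩, fun i => ⟨f i, hf i⟩, rfl⟩
  · rintro ⟨n, c, f, rfl⟩
    exact ⟨n, fun i => c i, fun i => f i, fun i => (c i).2, fun i => (f i).2, rfl⟩

theorem subset_coneOf (X : Set V) : X ⊆ coneOf X := by
  rw [coneOf_eq_hull]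
  exact PointedCone.subset_hull

theorem zero_mem_coneOf (X : Set V) : (0 : V) ∈ coneOf X := by
  rw [coneOf_eq_hull]
  exact zero_mem _

theorem coneOf_subset_coneOf {X Y : Set V} (h : X ⊆ coneOf Y) : coneOf X ⊆ coneOf Y := by
  rw [coneOf_eq_hull, coneOf_eq_hull] at *
  exact Submodule.span_le.mpr h

theorem coneOf_mono {X Y : Set V} (h : X ⊆ Y) : coneOf X ⊆ coneOf Y :=
  coneOf_subset_coneOf (h.trans (subset_coneOf Y))

theorem mem_coneOf_pair {a b v : V} :
    v ∈ coneOf {a, b} ↔ ∃ r s : ℝ, 0 ≤ r ∧ 0 ≤ s ∧ r • a + s • b = v := by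
  rw [coneOf_eq_hull, SetLike.mem_coe, Submodule.mem_span_pair]
  constructor
  · rintro ⟨r, s, rfl⟩
    exact ⟨r, s, r.2, s.2, rfl⟩
  · rintro ⟨r, s, hr, hs, rfl⟩
    exact ⟨⟨r, hr⟩, ⟨s, hs⟩, rfl⟩

theorem mem_coneOf_range {ι : Type*} [Fintype ι] {α : ι → V} {v : V} :
    v ∈ coneOf (Set.range α) ↔ ∃ c : ι → ℝ, (∀ i, 0 ≤ c i) ∧ ∑ i, c i • α i = v := by
  rw [coneOf_eq_hull, SetLike.mem_coe, Submodule.mem_span_range_iff_exists_fun]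
  constructor
  · rintro ⟨c, rfl⟩
    exact ⟨fun i => c i, fun i => (c i).2, rfl⟩
  · rintro ⟨c, hc, rfl⟩
    exact ⟨fun i => ⟨c i, hc i⟩, rfl⟩

theorem eq_zero_or_pos_of_mem_coneOf {X : Set V} {g : V →ₗ[ℝ] ℝ} (hg : ∀ x ∈ X, 0 < g x)
    {v : V} (hv : v ∈ coneOf X) : v = 0 ∨ 0 < g v := by
  rw [coneOf_eq_hull] at hv
  induction hv using Submodule.span_induction with
  | mem x hx => exact .inr (hg x hx)
  | zero => exact .inl rfl
  | add x y _ _ hx hy =>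
    rcases hx with rfl | hx
    · simpa using hy
    rcases hy with rfl | hy
    · simpa using Or.inr hx
    exact .inr (by rw [map_add]; positivity)
  | smul r x _ hx =>
    change (r : ℝ) • x = 0 ∨ 0 < g ((r : ℝ) • x)
    rcases hx with rfl | hx
    · simp
    rcases r.2.eq_or_lt with hr | hr
    · simp [← hr]
    · rw [map_smul, smul_eq_mul]
      exact .inr (by positivity)

end Cone

theorem LinearMap.exists_comp_eq_of_ker_le {K U V V' : Type*} [Field K] [AddCommGroup U]
    [Module K U] [AddCommGroup V] [Module K V] [AddCommGroup V'] [Module K V']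
    (L : U →ₗ[K] V) (ψ : U →ₗ[K] V') (h : LinearMap.ker L ≤ LinearMap.ker ψ) :
    ∃ f : V →ₗ[K] V', f ∘ₗ L = ψ := by
  obtain ⟨g, hg⟩ := ((LinearMap.ker L).liftQ L le_rfl).exists_leftInverse_of_injective
    (Submodule.ker_liftQ_eq_bot _ _ _ le_rfl)
  refine ⟨(LinearMap.ker L).liftQ ψ h ∘ₗ g, ?_⟩
  ext u
  simpa using congr((LinearMap.ker L).liftQ ψ h ($hg (Submodule.Quotient.mk u)))

/-- Gordan's theorem: separate the standard simplex from the kernel of `c ↦ ∑ i, c i • v i`. -/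
theorem exists_linearMap_pos_of_posIndep {ι V : Type*} [Fintype ι] [AddCommGroup V]
    [Module ℝ V] (v : ι → V)
    (hv : ∀ c : ι → ℝ, (∀ i, 0 ≤ c i) → ∑ i, c i • v i = 0 → ∀ i, c i = 0) :
    ∃ f : V →ₗ[ℝ] ℝ, ∀ i, 0 < f (v i) := by
  classical
  set L := Fintype.linearCombination ℝ v
  have hdisj : Disjoint (stdSimplex ℝ ι) (LinearMap.ker L : Set (ι → ℝ)) := by
    refine Set.disjoint_left.mpr fun c hc hcL => ?_
    have hc0 := hv c hc.1 (by simpa [L, Fintype.linearCombination_apply] using hcL)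
    simpa [hc0] using hc.2
  obtain ⟨ψ, u, w, hψs, huw, hψk⟩ := geometric_hahn_banach_compact_closed
    (convex_stdSimplex ℝ ι) (isCompact_stdSimplex ℝ ι) (LinearMap.ker L).convex
    (LinearMap.ker L).closed_of_finiteDimensional hdisj
  have hψker : LinearMap.ker L ≤ LinearMap.ker ψ.toLinearMap := by
    intro x hx
    by_contra! hψx
    change ψ x ≠ 0 at hψx
    have := hψk ((w / ψ x) • x) (Submodule.smul_mem _ _ hx)
    rw [map_smul, smul_eq_mul, div_mul_cancel₀ _ hψx] at this
    exact lt_irrefl _ this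
  have hw : w < 0 := by simpa using hψk 0 (zero_mem _)
  obtain ⟨f, hf⟩ :=
    LinearMap.exists_comp_eq_of_ker_le L (-ψ.toLinearMap) (by simpa using hψker)
  refine ⟨f, fun i => ?_⟩
  have hfi : f (v i) = -ψ (Pi.single i 1) := by
    simpa [L, Fintype.linearCombination_apply, Pi.single_apply] using congr($hf (Pi.single i 1))
  have := hψs _ (single_mem_stdSimplex ℝ i)
  linarith

section Chebyshev

open Polynomial Polynomial.Chebyshev

theorem chebyshevU_eval_add_one (c : ℝ) (n : ℤ) :
    (U ℝ (n + 1)).eval c = 2 * c * (U ℝ n).eval c - (U ℝ (n - 1)).eval c := by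
  simp [U_add_one]

theorem chebyshevU_eval_nonneg_of_one_le {c : ℝ} (hc : 1 ≤ c) {n : ℤ} (hn : -1 ≤ n) :
    0 ≤ (U ℝ n).eval c := by
  have key : ∀ k : ℕ, 0 ≤ (U ℝ (k - 1)).eval c ∧ (U ℝ (k - 1)).eval c ≤ (U ℝ k).eval c := by
    intro k
    induction k with
    | zero => simp
    | succ k ih =>
      push_cast
      rw [add_sub_cancel_right, chebyshevU_eval_add_one]
      constructor <;> nlinarith
  obtain ⟨k, rfl⟩ : ∃ k : ℕ, n = k - 1 := ⟨(n + 1).toNat, by omega⟩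
  exact (key k).1

theorem chebyshevU_eval_cos_pi_div_nonneg {m : ℕ} (hm : 2 ≤ m) {n : ℤ} (hn : -1 ≤ n)
    (hnm : n + 1 ≤ m) : 0 ≤ (U ℝ n).eval (Real.cos (Real.pi / m)) := by
  have hm' : (2 : ℝ) ≤ m := by exact_mod_cast hm
  have hsin : 0 < Real.sin (Real.pi / m) :=
    Real.sin_pos_of_pos_of_lt_pi (by positivity) (div_lt_self Real.pi_pos (by linarith))
  have hnm' : ((n : ℝ) + 1) * (Real.pi / m) ≤ Real.pi := by
    rw [mul_div_assoc', div_le_iff₀ (by positivity), mul_comm]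
    gcongr
    exact_mod_cast hnm
  have hn' : (0 : ℝ) ≤ n + 1 := by
    have : (-1 : ℝ) ≤ n := by exact_mod_cast hn
    linarith
  have hsin_n : 0 ≤ Real.sin ((n + 1) * (Real.pi / m)) :=
    Real.sin_nonneg_of_nonneg_of_le_pi (by positivity) hnm'
  rw [← U_real_cos] at hsin_n
  exact nonneg_of_mul_nonneg_left hsin_n hsin

end Chebyshev

namespace CoxeterSystem

variable {B : Type*} {W : Type*} [Group W] {M : CoxeterMatrix B} (cs : CoxeterSystem M W)

/-- `u` is the minimal-length representative of the coset `w ⟨s_i, s_j⟩`. -/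
theorem exists_eq_mul_alternatingWord (w : W) (i j : B)
    (hi : cs.length w < cs.length (w * cs.simple i)) :
    ∃ (u : W) (k : ℕ), cs.length u + k = cs.length w ∧
      w = u * cs.wordProd (alternatingWord i j k) ∧
      cs.length u < cs.length (u * cs.simple i) ∧ cs.length u < cs.length (u * cs.simple j) := by
  by_cases hj : cs.length w < cs.length (w * cs.simple j)
  · exact ⟨w, 0, rfl, by simp [alternatingWord], hi, hj⟩
  have hwj : cs.length (w * cs.simple j) + 1 = cs.length w := by
    have := cs.length_mul_simple w j; omega
  obtain ⟨u, k, hlen, hw, huj, hui⟩ := exists_eq_mul_alternatingWord (w * cs.simple j)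
    j i (by rw [cs.simple_mul_simple_cancel_right]; omega)
  refine ⟨u, k + 1, by omega, ?_, hui, huj⟩
  rw [alternatingWord_succ, wordProd_concat, ← mul_assoc, ← hw,
    cs.simple_mul_simple_cancel_right]
termination_by cs.length w
decreasing_by omega

/-- Otherwise `alternatingWord j i (k + 1)` is not reduced, which contradicts `hi`. -/
theorem M_eq_zero_or_lt_of_length_mul_alternatingWord {u : W} {i j : B} {k : ℕ}
    (hlen : cs.length u + k = cs.length (u * cs.wordProd (alternatingWord i j k)))
    (hi : cs.length (u * cs.wordProd (alternatingWord i j k)) <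
      cs.length (u * cs.wordProd (alternatingWord i j k) * cs.simple i)) :
    M.M i j = 0 ∨ k < M.M i j := by
  by_contra! h
  have hred := cs.not_isReduced_alternatingWord j i (m := k + 1)
    (by rw [M.symmetric]; exact h.1) (by rw [M.symmetric]; omega)
  have hlt : cs.length (cs.wordProd (alternatingWord j i (k + 1))) < k + 1 := by
    have := cs.length_wordProd_le (alternatingWord j i (k + 1))
    rw [length_alternatingWord] at this
    exact lt_of_le_of_ne this fun h' =>
      hred (by rw [CoxeterSystem.IsReduced, h', length_alternatingWord])
  have hwi : u * cs.wordProd (alternatingWord i j k) * cs.simple i =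
      u * cs.wordProd (alternatingWord j i (k + 1)) := by
    rw [alternatingWord_succ, wordProd_concat, mul_assoc]
  have := cs.length_mul_le u (cs.wordProd (alternatingWord j i (k + 1)))
  rw [← hwi] at this
  omega

end CoxeterSystem

namespace GeomRep

open CoxeterSystem Polynomial.Chebyshev

variable {B : Type*} [Fintype B] {W : Type*} [Group W]
  {M : CoxeterMatrix B} {cs : CoxeterSystem M W}
  {V : Type*} [AddCommGroup V] [Module ℝ V] (G : GeomRep M cs V)

theorem π_mul_apply (w w' : W) (v : V) : G.π (w * w') v = G.π w (G.π w' v) := by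
  rw [map_mul]; rfl

theorem π_inv_apply_π (w : W) (v : V) : G.π w⁻¹ (G.π w v) = v := by
  rw [← G.π_mul_apply, inv_mul_cancel, map_one]; rfl

theorem π_simple_α (i : B) : G.π (cs.simple i) (G.α i) = -G.α i := by
  rw [G.simple_refl, G.norm_one, mul_one, two_smul]
  abel

theorem π_simple_π_simple (i : B) (v : V) : G.π (cs.simple i) (G.π (cs.simple i) v) = v := by
  rw [← G.π_mul_apply, cs.simple_mul_simple_self, map_one]; rfl

theorem bil_π_π (w : W) (u v : V) : G.bil (G.π w u) (G.π w v) = G.bil u v := by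
  induction w using cs.simple_induction generalizing u v with
  | simple i =>
    simp only [G.simple_refl, map_sub, map_smul, LinearMap.sub_apply, LinearMap.smul_apply,
      smul_eq_mul, G.norm_one, G.bil_symm u (G.α i)]
    ring
  | one => simp
  | mul w w' hw hw' => rw [G.π_mul_apply, G.π_mul_apply, hw, hw']

theorem bil_self_of_mem_Phi {γ : V} (hγ : γ ∈ G.Phi) : G.bil γ γ = 1 := by
  obtain ⟨w, i, rfl⟩ := hγ
  rw [G.bil_π_π, G.norm_one]

theorem zero_notMem_Phi : (0 : V) ∉ G.Phi := fun h => by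
  simpa using G.bil_self_of_mem_Phi h

theorem π_mem_Phi (w : W) {γ : V} (hγ : γ ∈ G.Phi) : G.π w γ ∈ G.Phi := by
  obtain ⟨w', i, rfl⟩ := hγ
  exact ⟨w * w', i, G.π_mul_apply _ _ _⟩

theorem neg_mem_Phi {γ : V} (hγ : γ ∈ G.Phi) : -γ ∈ G.Phi := by
  obtain ⟨w, i, rfl⟩ := hγ
  exact ⟨w * cs.simple i, i, by rw [G.π_mul_apply, G.π_simple_α, map_neg]⟩

theorem α_mem_PhiPos (i : B) : G.α i ∈ G.PhiPos :=
  ⟨⟨1, i, by rw [map_one]; rfl⟩, subset_coneOf _ (Set.mem_range_self i)⟩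

theorem bil_α_α_nonpos {i j : B} (hij : i ≠ j) : G.bil (G.α i) (G.α j) ≤ 0 := by
  by_cases hM : M.M i j = 0
  · linarith [G.angle_infinite i j hij hM]
  rw [G.angle_finite i j hij hM, neg_nonpos]
  have hm : (2 : ℝ) ≤ M.M i j := by
    have := M.off_diagonal i j hij
    exact_mod_cast (by omega : 2 ≤ M.M i j)
  have hθ : 0 ≤ Real.pi / M.M i j := by positivity
  exact Real.cos_nonneg_of_mem_Icc
    ⟨by linarith [Real.pi_pos], div_le_div_of_nonneg_left Real.pi_pos.le (by norm_num) hm⟩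

theorem exists_linearMap_α_pos : ∃ f : V →ₗ[ℝ] ℝ, ∀ i, 0 < f (G.α i) :=
  exists_linearMap_pos_of_posIndep G.α G.pos_indep

theorem pos_of_mem_PhiPos {f : V →ₗ[ℝ] ℝ} (hf : ∀ i, 0 < f (G.α i)) {v : V}
    (hv : v ∈ G.PhiPos) : 0 < f v :=
  (eq_zero_or_pos_of_mem_coneOf (by rintro _ ⟨i, rfl⟩; exact hf i) hv.2).resolve_left
    fun h => G.zero_notMem_Phi (h ▸ hv.1)

theorem neg_notMem_PhiPos {v : V} (hv : v ∈ G.PhiPos) : -v ∉ G.PhiPos := fun hv' => by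
  obtain ⟨f, hf⟩ := G.exists_linearMap_α_pos
  linarith [G.pos_of_mem_PhiPos hf hv, G.pos_of_mem_PhiPos hf hv', map_neg f v]

theorem π_simple_smul_add_smul (x y : B) (p q : ℝ) :
    G.π (cs.simple y) (p • G.α x + q • G.α y) =
      p • G.α x + (2 * -G.bil (G.α x) (G.α y) * p - q) • G.α y := by
  rw [G.simple_refl, map_add, map_smul, map_smul, G.norm_one, G.bil_symm (G.α y)]
  simp only [smul_eq_mul]
  module

theorem π_alternatingWord_α (i j : B) (k : ℕ) :
    G.π (cs.wordProd (alternatingWord i j k)) (G.α i) =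
      (U ℝ k).eval (-G.bil (G.α i) (G.α j)) • G.α (if Even k then i else j) +
      (U ℝ (k - 1)).eval (-G.bil (G.α i) (G.α j)) • G.α (if Even k then j else i) := by
  induction k with
  | zero => simp [alternatingWord]
  | succ k ih =>
    rw [alternatingWord_succ', wordProd_cons, G.π_mul_apply, ih]
    push_cast
    rw [add_sub_cancel_right, chebyshevU_eval_add_one]
    by_cases hk : Even k
    · simp only [hk, Nat.even_add_one, not_true, if_true, if_false, π_simple_smul_add_smul]
      rw [add_comm]
    · simp only [hk, Nat.even_add_one, not_false_iff, if_true, if_false,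
        π_simple_smul_add_smul, G.bil_symm (G.α j)]
      rw [add_comm]

theorem π_alternatingWord_α_eq_smul_add_smul (i j : B) (hij : i ≠ j) {k : ℕ}
    (hk : M.M i j = 0 ∨ k < M.M i j) :
    ∃ p q : ℝ, 0 ≤ p ∧ 0 ≤ q ∧
      G.π (cs.wordProd (alternatingWord i j k)) (G.α i) = p • G.α i + q • G.α j := by
  have hU : ∀ n : ℤ, -1 ≤ n → n ≤ k → 0 ≤ (U ℝ n).eval (-G.bil (G.α i) (G.α j)) := by
    intro n hn hnk
    rcases hk with hM | hk
    · exact chebyshevU_eval_nonneg_of_one_le (by linarith [G.angle_infinite i j hij hM]) hn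
    · rw [G.angle_finite i j hij (by omega), neg_neg]
      exact chebyshevU_eval_cos_pi_div_nonneg (by have := M.off_diagonal i j hij; omega) hn
        (by omega)
  have h₀ := hU k (by omega) le_rfl
  have h₁ := hU (k - 1) (by omega) (by omega)
  rw [G.π_alternatingWord_α]
  by_cases hk : Even k
  · exact ⟨_, _, h₀, h₁, by simp only [hk, if_true]⟩
  · exact ⟨_, _, h₁, h₀, by simp only [hk, if_false]; rw [add_comm]⟩

theorem π_α_mem_coneOf_of_length_lt (w : W) (i : B)
    (hi : cs.length w < cs.length (w * cs.simple i)) :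
    G.π w (G.α i) ∈ coneOf (Set.range G.α) := by
  by_cases hw1 : w = 1
  · rw [hw1, map_one]
    exact subset_coneOf _ (Set.mem_range_self i)
  obtain ⟨j, hj⟩ := cs.exists_rightDescent_of_ne_one hw1
  rw [isRightDescent_iff] at hj
  have hij : i ≠ j := by rintro rfl; omega
  obtain ⟨u, k, hlen, rfl, hui, huj⟩ := cs.exists_eq_mul_alternatingWord w i j hi
  have hk : k ≠ 0 := by
    rintro rfl
    simp only [alternatingWord, wordProd_nil, mul_one] at hj
    omega
  have hkM := cs.M_eq_zero_or_lt_of_length_mul_alternatingWord hlen hi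
  obtain ⟨p, q, hp, hq, hpq⟩ := G.π_alternatingWord_α_eq_smul_add_smul i j hij hkM
  have hu_i := π_α_mem_coneOf_of_length_lt u i hui
  have hu_j := π_α_mem_coneOf_of_length_lt u j huj
  rw [G.π_mul_apply, hpq, map_add, map_smul, map_smul]
  refine coneOf_subset_coneOf ?_ (mem_coneOf_pair.mpr ⟨p, q, hp, hq, rfl⟩)
  rintro _ (rfl | rfl) <;> assumption
termination_by cs.length w
decreasing_by all_goals omega

theorem mem_PhiPos_or_neg_mem_PhiPos {γ : V} (hγ : γ ∈ G.Phi) :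
    γ ∈ G.PhiPos ∨ -γ ∈ G.PhiPos := by
  obtain ⟨w, i, rfl⟩ := hγ
  rcases cs.length_mul_simple w i with h | h
  · exact .inl ⟨⟨w, i, rfl⟩, G.π_α_mem_coneOf_of_length_lt w i (by omega)⟩
  · refine .inr ⟨G.neg_mem_Phi ⟨w, i, rfl⟩, ?_⟩
    have hpos := G.π_α_mem_coneOf_of_length_lt (w * cs.simple i) i
      (by rw [cs.simple_mul_simple_cancel_right]; omega)
    rwa [G.π_mul_apply, G.π_simple_α, map_neg] at hpos

theorem eq_α_of_mem_Phi_of_eq_smul {γ : V} (hγ : γ ∈ G.Phi) {i : B} {c : ℝ} (hc : 0 ≤ c)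
    (h : γ = c • G.α i) : γ = G.α i := by
  have h1 := G.bil_self_of_mem_Phi hγ
  simp only [h, map_smul, LinearMap.smul_apply, smul_eq_mul, G.norm_one] at h1
  rw [h, show c = 1 by nlinarith, one_smul]

/-- Pairing with `α_i` gives `t ≤ e i`; then positive independence applies to
`e - t • Pi.single i 1`. -/
theorem coeff_eq_zero_of_sum_eq_smul_α {e : B → ℝ} (he : ∀ j, 0 ≤ e j) {i : B} {t : ℝ}
    (h : ∑ j, e j • G.α j = t • G.α i) {j : B} (hji : j ≠ i) : e j = 0 := by
  classical
  have hpair := congr(G.bil $h (G.α i))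
  simp only [map_sum, map_smul, LinearMap.sum_apply, LinearMap.smul_apply, smul_eq_mul] at hpair
  rw [← Finset.add_sum_erase _ _ (Finset.mem_univ i), G.norm_one, mul_one] at hpair
  have hoff : ∑ k ∈ Finset.univ.erase i, e k * G.bil (G.α k) (G.α i) ≤ 0 :=
    Finset.sum_nonpos fun k hk =>
      mul_nonpos_of_nonneg_of_nonpos (he k) (G.bil_α_α_nonpos (Finset.ne_of_mem_erase hk))
  have hzero := G.pos_indep (e - t • Pi.single i 1) (fun k => by
      by_cases hk : k = i
      · subst hk; simp; linarith
      · simpa [hk] using he k)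
    (by simp [sub_smul, Finset.sum_sub_distrib, h, Pi.single_apply])
  simpa [hji] using hzero j

theorem π_simple_mem_PhiPos {i : B} {β : V} (hβ : β ∈ G.PhiPos) (hne : β ≠ G.α i) :
    G.π (cs.simple i) β ∈ G.PhiPos := by
  refine (G.mem_PhiPos_or_neg_mem_PhiPos (G.π_mem_Phi _ hβ.1)).resolve_right fun hneg =>
    hne ?_
  obtain ⟨c, hc, rfl⟩ := mem_coneOf_range.mp hβ.2
  obtain ⟨d, hd, hdsum⟩ := mem_coneOf_range.mp hneg.2
  have hsum : ∑ j, (c j + d j) • G.α j = (2 * G.bil (G.α i) (∑ j, c j • G.α j)) • G.α i := by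
    simp only [add_smul, Finset.sum_add_distrib, hdsum, G.simple_refl]
    abel
  have hc0 : ∀ j, j ≠ i → c j = 0 := fun j hj => by
    have := G.coeff_eq_zero_of_sum_eq_smul_α (fun j => add_nonneg (hc j) (hd j)) hsum hj
    linarith [hc j, hd j]
  refine G.eq_α_of_mem_Phi_of_eq_smul hβ.1 (hc i) ?_
  exact Finset.sum_eq_single i (fun j _ hj => by rw [hc0 j hj, zero_smul]) (by simp)

theorem coneOf_pair_inter_Phi_subset_PhiPos {a b : V} (ha : a ∈ G.PhiPos)
    (hb : b ∈ G.PhiPos) : coneOf {a, b} ∩ G.Phi ⊆ G.PhiPos := by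
  refine fun v hv => ⟨hv.2, coneOf_subset_coneOf ?_ hv.1⟩
  rintro _ (rfl | rfl)
  exacts [ha.2, hb.2]

variable {G} in
theorem IsClosedSet.mem_of_smul_eq_add {S : Set V} (hS : G.IsClosedSet S)
    (hSpos : S ⊆ G.PhiPos) {u z x : V} (hu : u ∈ S) (hz : z ∈ S) (hx : x ∈ G.Phi) {p q : ℝ}
    (hp : 0 ≤ p) (hq : 0 ≤ q) (h : p • x = u + q • z) : x ∈ S := by
  rcases hp.eq_or_lt with rfl | hp
  · obtain ⟨f, hf⟩ := G.exists_linearMap_α_pos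
    have := congr(f $h)
    simp only [zero_smul, map_zero, map_add, map_smul, smul_eq_mul] at this
    nlinarith [G.pos_of_mem_PhiPos hf (hSpos hu), G.pos_of_mem_PhiPos hf (hSpos hz)]
  refine hS u hu z hz
    ⟨mem_coneOf_pair.mpr ⟨p⁻¹, p⁻¹ * q, by positivity, by positivity, ?_⟩, hx⟩
  rw [mul_smul, ← smul_add, ← h, smul_smul, inv_mul_cancel₀ hp.ne', one_smul]

variable {G} in
theorem IsClosedSet.image_π {S : Set V} (hS : G.IsClosedSet S) (w : W) :
    G.IsClosedSet (G.π w '' S) := by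
  rintro _ ⟨x, hx, rfl⟩ _ ⟨y, hy, rfl⟩ γ ⟨hγ, hγΦ⟩
  obtain ⟨r, s, hr, hs, rfl⟩ := mem_coneOf_pair.mp hγ
  refine ⟨r • x + s • y, hS x hx y hy ⟨mem_coneOf_pair.mpr ⟨r, s, hr, hs, rfl⟩, ?_⟩, by simp⟩
  simpa only [map_add, map_smul, G.π_inv_apply_π] using G.π_mem_Phi w⁻¹ hγΦ

def twist (A : Set V) : Set V := (G.PhiPos \ A) ∪ -A

variable {G} in
theorem IsBiclosed.mem_twist_of_eq_smul_sub_smul {A : Set V} (hA : A ⊆ G.PhiPos)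
    (hbc : G.IsBiclosed A) {x a γ : V} {r s : ℝ} (hx : x ∈ G.PhiPos \ A) (ha : a ∈ A)
    (hr : 0 ≤ r) (hs : 0 ≤ s) (hγ : γ ∈ G.Phi) (hγeq : γ = r • x - s • a) : γ ∈ G.twist A := by
  rcases G.mem_PhiPos_or_neg_mem_PhiPos hγ with hpos | hneg
  · by_cases hγA : γ ∈ A
    · exact absurd (hbc.1.mem_of_smul_eq_add hA hγA ha hx.1.1 hr hs
        (by rw [hγeq]; abel)) hx.2
    · exact .inl ⟨hpos, hγA⟩
  · by_cases hγA : -γ ∈ A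
    · exact .inr hγA
    · exact absurd (hbc.2.mem_of_smul_eq_add Set.sdiff_subset ⟨hneg, hγA⟩ hx (hA ha).1 hs hr
        (by rw [hγeq]; abel)) (fun h => h.2 ha)

variable {G} in
theorem IsBiclosed.isClosedSet_twist {A : Set V} (hA : A ⊆ G.PhiPos) (hbc : G.IsBiclosed A) :
    G.IsClosedSet (G.twist A) := by
  rintro x (hx | hx) y (hy | hy) γ ⟨hγ, hγΦ⟩ <;>
    obtain ⟨r, s, hr, hs, rfl⟩ := mem_coneOf_pair.mp hγ
  · exact .inl (hbc.2 x hx y hy ⟨hγ, hγΦ⟩)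
  · exact hbc.mem_twist_of_eq_smul_sub_smul hA hx hy hr hs hγΦ (by rw [smul_neg, sub_neg_eq_add])
  · exact hbc.mem_twist_of_eq_smul_sub_smul hA hy hx hs hr hγΦ
      (by rw [smul_neg, sub_neg_eq_add, add_comm])
  · refine .inr (hbc.1 _ hx _ hy ⟨mem_coneOf_pair.mpr ⟨r, s, hr, hs, ?_⟩, G.neg_mem_Phi hγΦ⟩)
    simp only [smul_neg, neg_add]

theorem isBiclosed_of_isClosedSet_twist {A : Set V} (hA : A ⊆ G.PhiPos)
    (h : G.IsClosedSet (G.twist A)) : G.IsBiclosed A := by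
  constructor
  · intro a ha b hb γ ⟨hγ, hγΦ⟩
    obtain ⟨r, s, hr, hs, rfl⟩ := mem_coneOf_pair.mp hγ
    have hneg := h (-a) (.inr (by simpa using ha)) (-b) (.inr (by simpa using hb))
      ⟨mem_coneOf_pair.mpr ⟨r, s, hr, hs, by simp only [smul_neg, neg_add]⟩, G.neg_mem_Phi hγΦ⟩
    rcases hneg with hC | hA'
    · exact absurd hC.1 (G.neg_notMem_PhiPos
        (G.coneOf_pair_inter_Phi_subset_PhiPos (hA ha) (hA hb) ⟨hγ, hγΦ⟩))
    · simpa using hA'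
  · intro x hx y hy γ hγ
    have hpos := G.coneOf_pair_inter_Phi_subset_PhiPos hx.1 hy.1 hγ
    rcases h x (.inl hx) y (.inl hy) hγ with hC | hA'
    · exact hC
    · exact absurd (hA hA') (G.neg_notMem_PhiPos hpos)

theorem twist_image_π_simple {A : Set V} (hA : A ⊆ G.PhiPos) {i : B} (hi : G.α i ∈ A) :
    G.twist (G.π (cs.simple i) '' (A \ {G.α i})) = G.π (cs.simple i) '' G.twist A := by
  set σ := G.π (cs.simple i)
  have hσσ : ∀ v, σ (σ v) = v := G.π_simple_π_simple i
  have hσα : σ (G.α i) = -G.α i := G.π_simple_α i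
  have hα_neg : -G.α i ∉ A := fun h => G.neg_notMem_PhiPos (G.α_mem_PhiPos i) (hA h)
  simp only [Set.image_eq_preimage_of_inverse hσσ hσσ]
  ext v
  simp only [twist, Set.mem_preimage, Set.mem_union, Set.mem_sdiff, Set.mem_neg,
    Set.mem_singleton_iff, map_neg]
  by_cases hv : v = G.α i
  · subst hv
    simp [hσα, hi, hα_neg, G.α_mem_PhiPos]
  by_cases hv' : v = -G.α i
  · subst hv'
    simp [hσα, hi, hα_neg, G.neg_notMem_PhiPos (G.α_mem_PhiPos i)]
  have hσv : σ v ≠ G.α i := fun h => hv' (by rw [← hσσ v, h, hσα])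
  have hσv' : -σ v ≠ G.α i := fun h => hv (by
    rw [← hσσ v, ← neg_neg (σ v), h, map_neg, hσα, neg_neg])
  have hpos : v ∈ G.PhiPos ↔ σ v ∈ G.PhiPos :=
    ⟨fun h => G.π_simple_mem_PhiPos h hv, fun h => hσσ v ▸ G.π_simple_mem_PhiPos h hσv⟩
  simp only [hσv, hσv', hpos, not_false_eq_true, and_true]

theorem exists_bil_α_pos {β : V} (hβ : β ∈ G.PhiPos) : ∃ j, 0 < G.bil (G.α j) β := by
  obtain ⟨c, hc, hβc⟩ := mem_coneOf_range.mp hβ.2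
  by_contra! h
  have hnorm := G.bil_self_of_mem_Phi hβ.1
  conv_lhs at hnorm => arg 1; rw [← hβc]
  simp only [map_sum, map_smul, LinearMap.sum_apply, LinearMap.smul_apply, smul_eq_mul] at hnorm
  have : ∑ j, c j * G.bil (G.α j) β ≤ 0 :=
    Finset.sum_nonpos fun j _ => mul_nonpos_of_nonneg_of_nonpos (hc j) (h j)
  linarith

/-- Take `β ∈ A` minimizing a functional positive on the simple roots, and `j` with
`B(α_j, β) > 0`. Then `β = t α_j + s_j β` with `t > 0`, so minimality excludes `s_j β ∈ A`,
and closedness of `Φ⁺ \ A` forces `α_j ∈ A`. -/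
theorem exists_α_mem {A : Set V} (hA : A ⊆ G.PhiPos) (hfin : A.Finite) (hne : A.Nonempty)
    (hbc : G.IsBiclosed A) : ∃ i, G.α i ∈ A := by
  obtain ⟨f, hf⟩ := G.exists_linearMap_α_pos
  obtain ⟨β, hβA, hmin⟩ := hfin.exists_minimalFor f A hne
  obtain ⟨j, hj⟩ := G.exists_bil_α_pos (hA hβA)
  by_cases hβj : β = G.α j
  · exact ⟨j, hβj ▸ hβA⟩
  by_contra! hα
  set γ := G.π (cs.simple j) β
  have hγ : γ ∈ G.PhiPos := G.π_simple_mem_PhiPos (hA hβA) hβj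
  have hβγ : β = (2 * G.bil (G.α j) β) • G.α j + γ := by
    simp only [γ, G.simple_refl]
    abel
  by_cases hγA : γ ∈ A
  · have hfβ := congr(f $hβγ)
    simp only [map_add, map_smul, smul_eq_mul] at hfβ
    have hlt : f γ < f β := by nlinarith [hf j]
    exact (hmin hγA hlt.le).not_gt hlt
  · refine (hbc.2 (G.α j) ⟨G.α_mem_PhiPos j, hα j⟩ γ ⟨hγ, hγA⟩ ⟨?_, (hA hβA).1⟩).2 hβA
    exact mem_coneOf_pair.mpr
      ⟨2 * G.bil (G.α j) β, 1, by positivity, zero_le_one, by rw [one_smul, ← hβγ]⟩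

theorem exists_neg_on_twist {A : Set V} (hA : A ⊆ G.PhiPos) (hfin : A.Finite)
    (hbc : G.IsBiclosed A) : ∃ g : V →ₗ[ℝ] ℝ, ∀ v ∈ G.twist A, g v < 0 := by
  induction hn : A.ncard generalizing A with
  | zero =>
    obtain rfl : A = ∅ := (Set.ncard_eq_zero hfin).mp hn
    obtain ⟨f, hf⟩ := G.exists_linearMap_α_pos
    refine ⟨-f, fun v hv => ?_⟩
    simp only [twist, Set.sdiff_empty, Set.neg_empty, Set.union_empty] at hv
    simpa using G.pos_of_mem_PhiPos hf hv
  | succ n ih =>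
    obtain ⟨i, hi⟩ := G.exists_α_mem hA hfin (Set.nonempty_of_ncard_ne_zero (by omega)) hbc
    set σ := G.π (cs.simple i)
    have hA' : σ '' (A \ {G.α i}) ⊆ G.PhiPos := by
      rintro _ ⟨β, ⟨hβA, hβi⟩, rfl⟩
      exact G.π_simple_mem_PhiPos (hA hβA) hβi
    have htwist := G.twist_image_π_simple hA hi
    have hbc' : G.IsBiclosed (σ '' (A \ {G.α i})) :=
      G.isBiclosed_of_isClosedSet_twist hA' (htwist ▸ (hbc.isClosedSet_twist hA).image_π _)
    obtain ⟨g, hg⟩ := ih hA' ((hfin.subset Set.sdiff_subset).image _) hbc'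
      (by rw [Set.ncard_image_of_injective _ σ.injective, Set.ncard_sdiff_singleton_of_mem hi,
        hn, Nat.add_sub_cancel])
    exact ⟨g ∘ₗ σ.toLinearMap, fun v hv => hg _ (htwist ▸ Set.mem_image_of_mem σ hv)⟩

variable {G} in
theorem IsBiclosed.isSeparable {A : Set V} (hA : A ⊆ G.PhiPos) (hfin : A.Finite)
    (hbc : G.IsBiclosed A) : G.IsSeparable A := by
  obtain ⟨g, hg⟩ := G.exists_neg_on_twist hA hfin hbc
  refine Set.eq_singleton_iff_unique_mem.mpr ⟨⟨zero_mem_coneOf _, zero_mem_coneOf _⟩, ?_⟩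
  rintro v ⟨hvA, hvC⟩
  have hposA : ∀ a ∈ A, 0 < g a := fun a ha => by
    simpa using hg (-a) (.inr (by simpa using ha))
  have hposC : ∀ b ∈ G.PhiPos \ A, 0 < (-g) b := fun b hb => by
    simpa using hg b (.inl hb)
  rcases eq_zero_or_pos_of_mem_coneOf hposA hvA with h | h₁
  · exact h
  rcases eq_zero_or_pos_of_mem_coneOf hposC hvC with h | h₂
  · exact h
  simp only [LinearMap.neg_apply] at h₂
  linarith

variable {G} in
theorem IsSeparable.isBiconvex {A : Set V} (hA : A ⊆ G.PhiPos) (hsep : G.IsSeparable A) :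
    G.IsBiconvex A := by
  have hconv : ∀ {S T : Set V}, S ⊆ G.PhiPos → coneOf S ∩ coneOf T = {0} →
      G.PhiPos \ S ⊆ T → G.IsConvexSet S := by
    intro S T hS hST hT
    refine Set.Subset.antisymm (fun a ha => ⟨subset_coneOf S ha, (hS ha).1⟩) ?_
    rintro v ⟨hv, hvΦ⟩
    by_contra hvS
    have hv0 : v ∈ coneOf S ∩ coneOf T :=
      ⟨hv, subset_coneOf T (hT ⟨⟨hvΦ, coneOf_subset_coneOf (fun x hx => (hS hx).2) hv⟩, hvS⟩)⟩
    rw [hST] at hv0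
    exact G.zero_notMem_Phi (hv0 ▸ hvΦ)
  refine ⟨hconv hA hsep fun _ h => h, hconv Set.sdiff_subset (by rwa [Set.inter_comm]) ?_⟩
  intro v ⟨hv, hvC⟩
  by_contra hvA
  exact hvC ⟨hv, hvA⟩

variable {G} in
theorem IsBiconvex.isBiclosed {A : Set V} (hbx : G.IsBiconvex A) : G.IsBiclosed A := by
  have hclosed : ∀ {S : Set V}, G.IsConvexSet S → G.IsClosedSet S := by
    intro S hS a ha b hb v ⟨hv, hvΦ⟩
    rw [hS]
    refine ⟨coneOf_mono ?_ hv, hvΦ⟩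
    rintro _ (rfl | rfl) <;> assumption
  exact ⟨hclosed hbx.1, hclosed hbx.2⟩

end GeomRep

/-- For finite `A ⊆ Φ⁺`: biclosed ↔ biconvex ↔ separable. -/
theorem stmt12 {B : Type*} [Fintype B] {W : Type*} [Group W]
    {M : CoxeterMatrix B} {cs : CoxeterSystem M W}
    {V : Type*} [AddCommGroup V] [Module ℝ V] (G : GeomRep M cs V)
    (A : Set V) (hA : A ⊆ G.PhiPos) (hfin : A.Finite) :
    (G.IsBiclosed A ↔ G.IsBiconvex A) ∧ (G.IsBiconvex A ↔ G.IsSeparable A) :=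
  ⟨⟨fun h => (h.isSeparable hA hfin).isBiconvex hA, fun h => h.isBiclosed⟩,
    ⟨fun h => h.isBiclosed.isSeparable hA hfin, fun h => h.isBiconvex hA⟩⟩
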